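/- arXiv:2111.05525 — 2 statements merged into one kernel-verified Lean document; each statement's English description precedes it below -/
import Mathlib

section
/- Let K be an infinite field, F an upper filter of partitions of n in dominance order, and f = g_d x_n^d + ... + g_1 x_n + g_0 ∈ K[x_1,...,x_n] with g_i ∈ K[x_1,...,x_{n-1}] and g_d ≠ 0, such that f vanishes on all points of K^n whose orbit type lies in F. Then each g_i vanishes on all points of K^{n-1} whose orbit type lies in F_{d+1} = {μ : μ + ⟨d+1⟩ ∈ F}. -/
open MvPolynomial

/-- `l` is a partition of `n`: non-increasing list of positive integers summing to `n`. -/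
def IsPartitionList (n : ℕ) (l : List ℕ) : Prop :=
  l.Pairwise (· ≥ ·) ∧ (∀ x ∈ l, 0 < x) ∧ l.sum = n

/-- Dominance order: `l ⊵ m` iff every partial sum of `m` is at most that of `l`. -/
def Dominates (l m : List ℕ) : Prop :=
  ∀ k : ℕ, (m.take k).sum ≤ (l.take k).sum

/-- `T` is a (bijective) tableau of shape `l`, sending each entry in `Fin n` to its
cell `(row, column)` (0-indexed) of the Young diagram of `l`. -/
def IsTableau (n : ℕ) (l : List ℕ) (T : Fin n → ℕ × ℕ) : Prop :=
  Function.Injective T ∧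
    ∀ p : ℕ × ℕ, p ∈ Set.range T ↔ p.1 < l.length ∧ p.2 < l.getD p.1 0

/-- The Specht polynomial of a tableau: product of `x i - x j` over pairs `i, j`
in the same column with `j` strictly below `i`. -/
noncomputable def spechtPoly (n : ℕ) (K : Type*) [Field K] (T : Fin n → ℕ × ℕ) :
    MvPolynomial (Fin n) K :=
  ∏ p ∈ Finset.univ.filter
      (fun p : Fin n × Fin n => (T p.1).2 = (T p.2).2 ∧ (T p.1).1 < (T p.2).1),
    (X p.1 - X p.2)

/-- The multiplicity of the value `v` among the coordinates of `a`. -/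
noncomputable def mult {K : Type*} {n : ℕ} (a : Fin n → K) (v : K) : ℕ :=
  {i | a i = v}.ncard

/-- `a ∈ K^n` has orbit type `l`: the multiplicities of the distinct coordinate
values of `a`, listed in non-increasing order, form the list `l`. -/
def HasOrbitType {K : Type*} {n : ℕ} (a : Fin n → K) (l : List ℕ) : Prop :=
  l.Pairwise (· ≥ ·) ∧
    ∃ α : Fin l.length → K, Function.Injective α ∧
      (∀ i, ∃ j, a i = α j) ∧ ∀ j : Fin l.length, mult a (α j) = l.get j

/-- `λ + ⟨k⟩` (1-indexed `k`): add one box to the `k`-th part and re-sort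
non-increasingly; append a part `1` if `k` exceeds the length. -/
def addBox (l : List ℕ) (k : ℕ) : List ℕ :=
  if k ≤ l.length then
    ((↑(l.set (k - 1) (l.getD (k - 1) 0 + 1)) : Multiset ℕ).sort (· ≤ ·)).reverse
  else l ++ [1]

/-- `F` is an upper filter of partitions of `n` for the dominance order. -/
def IsUpperFilter (n : ℕ) (F : Set (List ℕ)) : Prop :=
  (∀ l ∈ F, IsPartitionList n l) ∧
    ∀ l m : List ℕ, IsPartitionList n l → m ∈ F → Dominates l m → l ∈ F

/-- `F` is a lower filter of partitions of `n` for the dominance order. -/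
def IsLowerFilter (n : ℕ) (F : Set (List ℕ)) : Prop :=
  (∀ l ∈ F, IsPartitionList n l) ∧
    ∀ l m : List ℕ, IsPartitionList n m → l ∈ F → Dominates l m → m ∈ F

/-- Lexicographic order on exponent vectors with `x 0 < x 1 < ⋯ < x (n-1)`. -/
def lexLt {n : ℕ} (a b : Fin n →₀ ℕ) : Prop :=
  ∃ i, a i < b i ∧ ∀ j, i < j → a j = b j

/-- `m` is the initial (leading) monomial of `f` w.r.t. the strict order `lt`. -/
def IsInitialMon {K : Type*} [CommRing K] {n : ℕ}
    (lt : (Fin n →₀ ℕ) → (Fin n →₀ ℕ) → Prop)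
    (f : MvPolynomial (Fin n) K) (m : Fin n →₀ ℕ) : Prop :=
  m ∈ f.support ∧ ∀ m' ∈ f.support, m' ≠ m → lt m' m

/-- The Specht ideal of shape `l`. -/
noncomputable def spechtIdeal (n : ℕ) (K : Type*) [Field K] (l : List ℕ) :
    Ideal (MvPolynomial (Fin n) K) :=
  Ideal.span { f | ∃ T : Fin n → ℕ × ℕ, IsTableau n l T ∧ f = spechtPoly n K T }

/-- The Specht ideal of a family `F` of partitions: `Σ_{λ ∈ F} I_λ`. -/
noncomputable def spechtIdealFilter (n : ℕ) (K : Type*) [Field K] (F : Set (List ℕ)) :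
    Ideal (MvPolynomial (Fin n) K) :=
  Ideal.span { f | ∃ l ∈ F, ∃ T : Fin n → ℕ × ℕ, IsTableau n l T ∧ f = spechtPoly n K T }

/-- A monomial order on `K[x_1,…,x_n]`, given as a strict linear order on the
exponent vectors compatible with addition and with `0` minimal. -/
structure MonOrder (n : ℕ) where
  lt : (Fin n →₀ ℕ) → (Fin n →₀ ℕ) → Prop
  trichot : ∀ a b, lt a b ∨ a = b ∨ lt b a
  irrefl : ∀ a, ¬ lt a a
  trans' : ∀ a b c, lt a b → lt b c → lt a c
  zero_lt : ∀ a, a ≠ 0 → lt 0 a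
  add_right : ∀ a b c, lt a b → lt (a + c) (b + c)

/-!
Fix `b` of orbit type `μ`. Then `t ↦ f (b, t) = ∑ gₖ(b) tᵏ` has degree at most `d`, so it
suffices to find `d + 1` distinct values `t` for which `(b, t)` has orbit type in `F`.
If `μ` has more than `d` parts, taking for `t` the value of multiplicity `μⱼ` (`j ≤ d`) gives
orbit type `μ + ⟨j + 1⟩`, which dominates `μ + ⟨d + 1⟩ ∈ F`: the new box lands in a row no lower
than for `μ + ⟨d + 1⟩`. Otherwise `μ + ⟨d + 1⟩` is `μ` with a part `1` appended, the orbit type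
of `(b, t)` for each of the infinitely many `t` that are not coordinates of `b`.
A Vandermonde argument then makes all `gₖ(b)` vanish.
-/

lemma List.sum_take_set_add_one (l : List ℕ) {i : ℕ} (hi : i < l.length) (k : ℕ) :
    ((l.set i (l[i] + 1)).take k).sum = (l.take k).sum + if i < k then 1 else 0 := by
  rw [List.take_set]
  by_cases hik : i < k
  · have hik' : i < (l.take k).length := by simp [hik, hi]
    have h := List.sum_set (l.take k) i (l[i] + 1)
    have h' := List.sum_set (l.take k) i l[i]
    rw [← List.getElem_take (j := k) (h := hik'), List.set_getElem_self] at h'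
    simp only [hik', if_true, List.getElem_take] at h h'
    simp only [hik, if_true]
    omega
  · rw [List.set_eq_of_length_le (by simp; omega)]
    simp [hik]

lemma List.set_perm_set_of_getElem_eq {α : Type*} {l : List α} {i j : ℕ} (hi : i < l.length)
    (hj : j < l.length) (h : l[i] = l[j]) (a : α) : (l.set i a).Perm (l.set j a) :=
  (List.set_perm_cons_eraseIdx hi a).trans <|
    (((List.perm_eraseIdx_of_getElem?_eq (by simp [hi, hj, h])).2 (List.Perm.refl l)).cons a).trans
      (List.set_perm_cons_eraseIdx hj a).symm

lemma List.reverse_sort_eq_of_perm {α : Type*} [LinearOrder α] {L L' : List α}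
    (hs : L.Pairwise (· ≥ ·)) (h : L'.Perm L) :
    ((L' : Multiset α).sort (· ≤ ·)).reverse = L := by
  rw [Multiset.coe_eq_coe.2 (h.trans (List.reverse_perm L).symm), Multiset.coe_sort,
    List.mergeSort_eq_self _ (List.pairwise_reverse.2 hs), List.reverse_reverse]

/-- For sorted `μ`, the row that receives the new box of `μ + ⟨j + 1⟩`: the first row as long
as row `j` (for `j ≥ μ.length` and positive `μ`, this is `μ.length`). -/
def boxRow (μ : List ℕ) (j : ℕ) : ℕ :=
  μ.idxOf (μ.getD j 0)

section BoxRow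

variable {μ : List ℕ} {j : ℕ}

lemma boxRow_lt_length (hj : j < μ.length) : boxRow μ j < μ.length :=
  List.idxOf_lt_length_of_mem (List.getD_eq_getElem _ _ hj ▸ List.getElem_mem hj)

lemma getElem_boxRow (hj : j < μ.length) : μ[boxRow μ j]'(boxRow_lt_length hj) = μ[j] := by
  simp [boxRow, List.getElem?_eq_getElem hj]

lemma getElem_ne_of_lt_boxRow {p : ℕ} (hp : p < boxRow μ j) (hj : j < μ.length) :
    μ[p]'(hp.trans (boxRow_lt_length hj)) ≠ μ[j] := by
  simpa [List.getElem?_eq_getElem hj] using List.not_of_lt_findIdx hp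

lemma boxRow_le (hj : j < μ.length) : boxRow μ j ≤ j :=
  not_lt.1 fun h => getElem_ne_of_lt_boxRow h hj rfl

lemma boxRow_of_length_le (hpos : ∀ x ∈ μ, 0 < x) (hj : μ.length ≤ j) :
    boxRow μ j = μ.length := by
  rw [boxRow, List.getD_eq_default _ _ hj]
  exact List.idxOf_eq_length fun h => (hpos 0 h).false

lemma boxRow_mono (hs : μ.Pairwise (· ≥ ·)) (hpos : ∀ x ∈ μ, 0 < x) : Monotone (boxRow μ) := by
  intro j j' hjj'
  by_cases hj' : j' < μ.length
  swap
  · rw [boxRow_of_length_le hpos (not_lt.1 hj')]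
    exact List.idxOf_le_length
  have hj := hjj'.trans_lt hj'
  by_contra! hlt
  -- rows `boxRow μ j' < boxRow μ j ≤ j ≤ j'` squeeze `μ[j]` to the value of row `boxRow μ j'`
  have h1 := hs.sortedGE.getElem_ge_getElem_of_le (hi := hj) (hj := boxRow_lt_length hj')
    (hlt.le.trans (boxRow_le hj))
  have h2 := hs.sortedGE.getElem_ge_getElem_of_le (hi := hj') (hj := hj) hjj'
  rw [getElem_boxRow hj'] at h1
  exact getElem_ne_of_lt_boxRow hlt hj (by rw [getElem_boxRow hj']; omega)

lemma pairwise_set_boxRow (hs : μ.Pairwise (· ≥ ·)) (hj : j < μ.length) :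
    (μ.set (boxRow μ j) (μ[j] + 1)).Pairwise (· ≥ ·) := by
  refine (List.sortedGE_of_getElem_ge_getElem_of_le fun p q hp hq hqp => ?_).pairwise
  simp only [List.length_set] at hp hq
  have hsorted := hs.sortedGE.getElem_ge_getElem_of_le (hi := hp) (hj := hq) hqp
  have hr := getElem_boxRow hj
  simp only [List.getElem_set]
  split_ifs with hrp hrq hrq
  · rfl
  · subst hrp
    have hqr : q < boxRow μ j := lt_of_le_of_ne hqp (Ne.symm hrq)
    have := hs.sortedGE.getElem_ge_getElem_of_le (hi := boxRow_lt_length hj) (hj := hq) hqr.le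
    have := getElem_ne_of_lt_boxRow hqr hj
    omega
  · subst hrq
    omega
  · exact hsorted

end BoxRow

section AddBox

variable {μ : List ℕ} {j : ℕ}

lemma addBox_succ_of_lt (hs : μ.Pairwise (· ≥ ·)) (hj : j < μ.length) :
    addBox μ (j + 1) = μ.set (boxRow μ j) (μ[j] + 1) := by
  rw [addBox, if_pos (Nat.succ_le_of_lt hj), Nat.add_sub_cancel, List.getD_eq_getElem _ _ hj]
  exact List.reverse_sort_eq_of_perm (pairwise_set_boxRow hs hj)
    (List.set_perm_set_of_getElem_eq hj (boxRow_lt_length hj) (getElem_boxRow hj).symm _)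

lemma addBox_of_length_lt {k : ℕ} (h : μ.length < k) : addBox μ k = μ ++ [1] :=
  if_neg (by omega)

lemma sum_take_addBox (hs : μ.Pairwise (· ≥ ·)) (hpos : ∀ x ∈ μ, 0 < x) (j k : ℕ) :
    ((addBox μ (j + 1)).take k).sum = (μ.take k).sum + if boxRow μ j < k then 1 else 0 := by
  by_cases hj : j < μ.length
  · rw [addBox_succ_of_lt hs hj, ← getElem_boxRow hj, List.sum_take_set_add_one]
  · rw [addBox_of_length_lt (by omega), boxRow_of_length_le hpos (by omega), List.take_append,
      List.sum_append]
    by_cases hk : μ.length < k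
    · obtain ⟨m, rfl⟩ := Nat.exists_eq_add_of_lt hk
      rw [List.take_of_length_le (by omega), show μ.length + m + 1 - μ.length = m + 1 by omega]
      simp
    · rw [Nat.sub_eq_zero_of_le (not_lt.1 hk)]
      simp [hk]

lemma addBox_dominates_addBox (hs : μ.Pairwise (· ≥ ·)) (hpos : ∀ x ∈ μ, 0 < x) {d : ℕ}
    (hjd : j ≤ d) : Dominates (addBox μ (j + 1)) (addBox μ (d + 1)) := fun k => by
  rw [sum_take_addBox hs hpos, sum_take_addBox hs hpos]
  have := boxRow_mono hs hpos hjd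
  split_ifs <;> omega

lemma IsPartitionList.append_one {n : ℕ} (hμ : IsPartitionList n μ) :
    IsPartitionList (n + 1) (μ ++ [1]) := by
  obtain ⟨hs, hpos, hsum⟩ := hμ
  refine ⟨List.pairwise_append.2 ⟨hs, by simp, fun x hx y hy => ?_⟩, fun x hx => ?_,
    by simp [hsum]⟩
  · rw [List.mem_singleton.1 hy]
    exact hpos x hx
  · rcases List.mem_append.1 hx with hx | hx
    · exact hpos x hx
    · rw [List.mem_singleton.1 hx]
      exact Nat.one_pos

lemma IsPartitionList.addBox {n : ℕ} (hμ : IsPartitionList n μ) (j : ℕ) :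
    IsPartitionList (n + 1) (addBox μ (j + 1)) := by
  obtain ⟨hs, hpos, hsum⟩ := hμ
  by_cases hj : j < μ.length
  · rw [addBox_succ_of_lt hs hj]
    refine ⟨pairwise_set_boxRow hs hj, fun x hx => ?_, ?_⟩
    · exact (List.mem_or_eq_of_mem_set hx).elim (hpos x) (· ▸ Nat.succ_pos _)
    · have h := sum_take_addBox hs hpos j μ.length
      rw [addBox_succ_of_lt hs hj, List.take_of_length_le (by simp), List.take_length,
        if_pos (boxRow_lt_length hj)] at h
      rw [h, hsum]
  · rw [addBox_of_length_lt (by omega)]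
    exact IsPartitionList.append_one ⟨hs, hpos, hsum⟩

end AddBox

section Multiplicity

variable {K : Type*} {n : ℕ}

lemma mult_eq_card [DecidableEq K] (a : Fin n → K) (v : K) :
    mult a v = (Finset.univ.filter (a · = v)).card := by
  rw [mult, ← Set.ncard_coe_finset]
  simp

lemma mult_snoc [DecidableEq K] (b : Fin n → K) (t v : K) :
    mult (Fin.snoc b t : Fin (n + 1) → K) v = mult b v + if t = v then 1 else 0 := by
  simp only [mult_eq_card, Finset.card_filter, Fin.sum_univ_castSucc, Fin.snoc_castSucc,
    Fin.snoc_last]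

lemma mult_eq_zero_iff (a : Fin n → K) (v : K) : mult a v = 0 ↔ ∀ i, a i ≠ v := by
  rw [mult, Set.ncard_eq_zero, Set.eq_empty_iff_forall_notMem]
  rfl

end Multiplicity

def IsValueEnum {K : Type*} {n : ℕ} (a : Fin n → K) (l : List ℕ) (α : Fin l.length → K) :
    Prop :=
  Function.Injective α ∧ (∀ i, ∃ j, a i = α j) ∧ ∀ j, mult a (α j) = l.get j

namespace IsValueEnum

variable {K : Type*} {n : ℕ} {b : Fin n → K} {l : List ℕ} {α : Fin l.length → K}

lemma comp_swap (h : IsValueEnum b l α) {i j : Fin l.length} (hij : l.get i = l.get j) :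
    IsValueEnum b l (α ∘ Equiv.swap i j) := by
  obtain ⟨hinj, hcov, hmult⟩ := h
  refine ⟨hinj.comp (Equiv.injective _), fun x => ?_, fun x => ?_⟩
  · obtain ⟨y, hy⟩ := hcov x
    exact ⟨Equiv.swap i j y, by simp [hy]⟩
  · rw [Function.comp_apply, hmult]
    rcases eq_or_ne x i with rfl | hxi
    · simpa using hij.symm
    rcases eq_or_ne x j with rfl | hxj
    · simpa using hij
    · rw [Equiv.swap_apply_of_ne_of_ne hxi hxj]

lemma snoc_self (h : IsValueEnum b l α) (i : Fin l.length) :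
    IsValueEnum (Fin.snoc b (α i) : Fin (n + 1) → K) (l.set i (l.get i + 1))
      (α ∘ Fin.cast List.length_set) := by
  classical
  obtain ⟨hinj, hcov, hmult⟩ := h
  refine ⟨hinj.comp (Fin.cast_injective _), fun x => ?_, fun x => ?_⟩
  · refine Fin.lastCases ⟨Fin.cast List.length_set.symm i, by simp⟩ (fun x => ?_) x
    obtain ⟨y, hy⟩ := hcov x
    exact ⟨Fin.cast List.length_set.symm y, by simp [hy]⟩
  · simp only [Function.comp_apply, mult_snoc, hmult, hinj.eq_iff, List.get_eq_getElem,
      List.getElem_set, Fin.ext_iff, Fin.val_cast]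
    split_ifs with h <;> simp [h]

lemma snoc_fresh (h : IsValueEnum b l α) (hpos : ∀ x ∈ l, 0 < x) {t : K} (ht : ∀ i, b i ≠ t) :
    IsValueEnum (Fin.snoc b t : Fin (n + 1) → K) (l ++ [1])
      ((Fin.snoc α t : Fin (l.length + 1) → K) ∘ Fin.cast (by simp)) := by
  classical
  obtain ⟨hinj, hcov, hmult⟩ := h
  have hαt : ∀ j, α j ≠ t := fun j hj =>
    (hpos _ (l.get_mem j)).ne' (hmult j ▸ (mult_eq_zero_iff b _).2 (hj ▸ ht))
  have hlen : l.length + 1 = (l ++ [1]).length := by simp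
  refine ⟨(Fin.snoc_injective_of_injective hinj (by simpa using fun j => hαt j)).comp
    (Fin.cast_injective _), fun x => ?_, ?_⟩
  · refine Fin.lastCases ⟨Fin.cast hlen (Fin.last _), by simp⟩ (fun x => ?_) x
    obtain ⟨y, hy⟩ := hcov x
    exact ⟨Fin.cast hlen y.castSucc, by simpa using hy⟩
  · suffices ∀ y, mult (Fin.snoc b t : Fin (n + 1) → K) ((Fin.snoc α t : Fin (l.length + 1) → K) y)
        = (l ++ [1]).get (Fin.cast hlen y) from fun x => by simpa using this (Fin.cast hlen.symm x)
    refine Fin.lastCases ?_ fun y => ?_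
    · simp [mult_snoc, (mult_eq_zero_iff b t).2 ht]
    · simp [mult_snoc, hmult, (hαt y).symm]

lemma hasOrbitType_snoc_addBox (h : IsValueEnum b l α) (hs : l.Pairwise (· ≥ ·))
    (j : Fin l.length) : HasOrbitType (Fin.snoc b (α j) : Fin (n + 1) → K) (addBox l (j + 1)) := by
  -- move `α j` into row `boxRow l j`, which has the same multiplicity, and add the box there
  set r : Fin l.length := ⟨boxRow l j, boxRow_lt_length j.isLt⟩
  have hr : l.get r = l.get j := getElem_boxRow j.isLt
  have hsnoc := (h.comp_swap hr).snoc_self r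
  rw [Function.comp_apply, Equiv.swap_apply_left, hr] at hsnoc
  rw [addBox_succ_of_lt hs j.isLt]
  exact ⟨pairwise_set_boxRow hs j.isLt, _, hsnoc⟩

lemma hasOrbitType_snoc_of_forall_ne (h : IsValueEnum b l α) {m : ℕ} (hl : IsPartitionList m l)
    {t : K} (ht : ∀ i, b i ≠ t) : HasOrbitType (Fin.snoc b t : Fin (n + 1) → K) (l ++ [1]) :=
  ⟨hl.append_one.1, _, h.snoc_fresh hl.2.1 ht⟩

end IsValueEnum

lemma exists_injective_hasOrbitType_snoc_addBox {K : Type*} [Infinite K] {n : ℕ}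
    {b : Fin n → K} {μ : List ℕ} (hμ : IsPartitionList n μ) (hb : HasOrbitType b μ) (d : ℕ) :
    ∃ τ : Fin (d + 1) → K, Function.Injective τ ∧
      ∀ i, ∃ j ≤ d, HasOrbitType (Fin.snoc b (τ i) : Fin (n + 1) → K) (addBox μ (j + 1)) := by
  obtain ⟨hs, α, hα : IsValueEnum b μ α⟩ := hb
  by_cases hd : d < μ.length
  · exact ⟨α ∘ Fin.castLE hd, hα.1.comp (Fin.castLE_injective hd),
      fun i => ⟨i, Nat.lt_succ_iff.1 i.isLt, hα.hasOrbitType_snoc_addBox hs (Fin.castLE hd i)⟩⟩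
  · have := (Set.finite_range b).infinite_compl.to_subtype
    let τ := Infinite.natEmbedding ↥(Set.range b)ᶜ
    refine ⟨fun i => τ i, Subtype.val_injective.comp (τ.injective.comp Fin.val_injective),
      fun i => ⟨d, le_rfl, ?_⟩⟩
    rw [addBox_of_length_lt (by omega)]
    exact hα.hasOrbitType_snoc_of_forall_ne hμ fun k hk => (τ i).2 ⟨k, hk⟩

lemma eval_snoc_sum_rename_castSucc_mul_X_last_pow {R : Type*} [CommSemiring R] {n : ℕ}
    (g : ℕ → MvPolynomial (Fin n) R) (s : Finset ℕ) (b : Fin n → R) (t : R) :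
    eval (Fin.snoc b t : Fin (n + 1) → R)
        (∑ k ∈ s, rename Fin.castSucc (g k) * X (Fin.last n) ^ k) =
      ∑ k ∈ s, eval b (g k) * t ^ k := by
  simp [eval_rename, Function.comp_def]

theorem key_lemma_general {K : Type*} [Field K] [Infinite K] {n : ℕ} {F : Set (List ℕ)}
    (hF : IsUpperFilter (n + 1) F) {d : ℕ} (g : ℕ → MvPolynomial (Fin n) K)
    (f : MvPolynomial (Fin (n + 1)) K)
    (hf : f = ∑ k ∈ Finset.range (d + 1),
      rename (Fin.castSucc) (g k) * X (Fin.last n) ^ k)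
    (hvan : ∀ a : Fin (n + 1) → K, (∃ l ∈ F, HasOrbitType a l) → eval a f = 0) :
    ∀ k ≤ d, ∀ b : Fin n → K,
      (∃ μ, IsPartitionList n μ ∧ addBox μ (d + 1) ∈ F ∧ HasOrbitType b μ) →
        eval b (g k) = 0 := by
  rintro k hk b ⟨μ, hμ, hμF, hb⟩
  obtain ⟨τ, hτ, hτb⟩ := exists_injective_hasOrbitType_snoc_addBox hμ hb d
  have hcoeff := Matrix.eq_zero_of_forall_index_sum_mul_pow_eq_zero
    (v := fun i : Fin (d + 1) => eval b (g i)) hτ fun i => by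
      obtain ⟨j, hjd, hj⟩ := hτb i
      have hmem : addBox μ (j + 1) ∈ F :=
        hF.2 _ _ (hμ.addBox j) hμF (addBox_dominates_addBox hμ.1 hμ.2.1 hjd)
      have hzero := hvan _ ⟨_, hmem, hj⟩
      rwa [hf, eval_snoc_sum_rename_castSucc_mul_X_last_pow, Finset.sum_range] at hzero
  exact congrFun hcoeff ⟨k, Nat.lt_succ_of_le hk⟩

/-- Key lemma: if `f = Σ g_k x_n^k` (with `g_d ≠ 0`) vanishes on all points whose
orbit type lies in the upper filter `F`, then each `g_k` vanishes on all points
whose orbit type lies in `F_{d+1}`. -/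
theorem key_lemma {K : Type*} [Field K] [Infinite K] {n : ℕ} {F : Set (List ℕ)}
    (hF : IsUpperFilter (n + 1) F) {d : ℕ} (g : ℕ → MvPolynomial (Fin n) K)
    (hgd : g d ≠ 0) (f : MvPolynomial (Fin (n + 1)) K)
    (hf : f = ∑ k ∈ Finset.range (d + 1),
      rename (Fin.castSucc) (g k) * X (Fin.last n) ^ k)
    (hvan : ∀ a : Fin (n + 1) → K, (∃ l ∈ F, HasOrbitType a l) → eval a f = 0) :
    ∀ k ≤ d, ∀ b : Fin n → K,
      (∃ μ, IsPartitionList n μ ∧ addBox μ (d + 1) ∈ F ∧ HasOrbitType b μ) →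
        eval b (g k) = 0 :=
  key_lemma_general hF g f hf hvan
end

section
/- Let K be an infinite field and F a nonempty lower filter of partitions of n under dominance order. Then the Specht ideal I_F = Σ_{λ ∈ F} I_λ equals the vanishing ideal J_{P_n \ F} of the set of points whose orbit type is not in F; in particular, I_F is a radical (reduced) ideal. -/
open MvPolynomial

/-!
If a Specht polynomial `f_T` does not vanish at `a`, the coordinates of `a` are pairwise distinct
along every column of `T`. A column then holds at most `k` entries whose value is one of the `k`
most frequent values of `a`, and summing over the columns gives `λ ⊵ μ` for the shape `λ` of `T`
and the orbit type `μ` of `a`. For a lower filter `F` this proves `I_F ⊆ J_{P_n ∖ F}`.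

Conversely, order monomials lexicographically with `x₀` largest. Every `f ≠ 0` has a point `a`
with `f a ≠ 0` whose canonical tableau (of shape the orbit type of `a`) has a Specht polynomial
with leading monomial dividing that of `f`: by induction on `n`, `a₀` is chosen among the values
that are frequent among the other coordinates, and one of `deg_{x₀} f + 1` such values is not a
root. When `f ∈ J_{P_n ∖ F}` the orbit type of `a` lies in `F`, so reducing `f` by this Specht
polynomial stays in `J_{P_n ∖ F}` and lowers the leading monomial; induction gives `f ∈ I_F`.
Vanishing ideals are radical.
-/

open Finset MonomialOrder

theorem Finsupp.lex_cons_lt_cons_iff {n : ℕ} {x₀ y₀ : ℕ} {x y : Fin n →₀ ℕ} :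
    toLex (cons x₀ x) < toLex (cons y₀ y) ↔ x₀ < y₀ ∨ x₀ = y₀ ∧ toLex x < toLex y := by
  simp_rw [Finsupp.Lex.lt_iff, Fin.exists_fin_succ, Fin.forall_fin_succ]
  simp [cons_zero, cons_succ, Fin.succ_lt_succ_iff, and_assoc, exists_and_left]

namespace MonomialOrder

theorem reduce_eq_zero_or_degree_lt {σ R : Type*} [CommRing R] {m : MonomialOrder σ}
    {f b : MvPolynomial σ R} (hb : IsUnit (m.leadingCoeff b)) (hbf : m.degree b ≤ m.degree f) :
    m.reduce hb f = 0 ∨ m.degree (m.reduce hb f) ≺[m] m.degree f := by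
  by_cases hf : m.degree f = 0
  · have hb0 : m.degree b = 0 := nonpos_iff_eq_zero.1 (hf ▸ hbf)
    left
    rw [reduce, hf, hb0, tsub_zero, monomial_zero']
    nth_rw 1 [eq_C_of_degree_eq_zero hf]
    nth_rw 2 [eq_C_of_degree_eq_zero hb0]
    rw [← C_mul, ← C_sub, mul_right_comm, hb.val_inv_mul, one_mul, sub_self, C_0]
  · exact .inr (degree_reduce_lt hb hbf hf)

open Finsupp

variable {n : ℕ}

theorem lex_le_cons_iff {d₀ : ℕ} {d e : Fin n →₀ ℕ} :
    cons d₀ d ≼[lex] cons d₀ e ↔ d ≼[lex] e := by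
  rw [lex_le_iff, lex_le_iff, ← not_lt, ← not_lt, lex_cons_lt_cons_iff]
  simp

theorem apply_zero_le_of_lex_le {d e : Fin (n + 1) →₀ ℕ} (h : d ≼[lex] e) : d 0 ≤ e 0 := by
  rcases (lex_le_iff.1 h).lt_or_eq with h | h
  · rw [← cons_tail d, ← cons_tail e, lex_cons_lt_cons_iff] at h
    exact h.elim le_of_lt fun h => h.1.le
  · rw [toLex_inj.1 h]

theorem lex_degree_X_sub_X {R : Type*} [CommRing R] [Nontrivial R] {i j : Fin n} (h : i ≠ j) :
    lex.degree (X i - X j : MvPolynomial (Fin n) R) = single (min i j) 1 := by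
  wlog hij : i < j generalizing i j
  · rw [← neg_sub, degree_neg, this h.symm (lt_of_le_of_ne (not_lt.1 hij) h.symm), min_comm]
  rw [degree_sub_of_lt (by rw [degree_X, degree_X]; exact Lex.single_lt_iff.2 hij), degree_X,
    min_eq_left hij.le]

variable {R : Type*} [CommSemiring R]

theorem degreeOf_zero_le_lex_degree (f : MvPolynomial (Fin (n + 1)) R) :
    f.degreeOf 0 ≤ lex.degree f 0 :=
  degreeOf_le_iff.2 fun _ hd => apply_zero_le_of_lex_le (le_degree hd)

theorem coeff_finSuccEquiv_lex_degree_ne_zero {f : MvPolynomial (Fin (n + 1)) R} (hf : f ≠ 0) :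
    (finSuccEquiv R n f).coeff (lex.degree f 0) ≠ 0 :=
  ne_zero_iff.2 ⟨(lex.degree f).tail, by
    rw [finSuccEquiv_coeff_coeff, cons_tail]
    exact coeff_degree_ne_zero_iff.2 hf⟩

theorem lex_degree_coeff_finSuccEquiv {f : MvPolynomial (Fin (n + 1)) R} (hf : f ≠ 0) :
    lex.degree ((finSuccEquiv R n f).coeff (lex.degree f 0)) = (lex.degree f).tail := by
  refine lex.toSyn.injective (le_antisymm (degree_le_iff.2 fun d hd => ?_) (le_degree ?_))
  · rw [← lex_le_cons_iff (d₀ := lex.degree f 0), cons_tail]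
    exact le_degree (mem_support_coeff_finSuccEquiv.1 hd)
  · rw [MvPolynomial.mem_support_iff, finSuccEquiv_coeff_coeff, cons_tail]
    exact coeff_degree_ne_zero_iff.2 hf

end MonomialOrder

theorem MvPolynomial.isRadical_vanishingIdeal {k K σ : Type*} [Field k] [Field K] [Algebra k K]
    (V : Set (σ → K)) : (vanishingIdeal k V).IsRadical := fun p ⟨m, hm⟩ x hx =>
  IsNilpotent.eq_zero ⟨m, by rw [← map_pow]; exact hm x hx⟩

theorem Finset.exists_card_eq_forall_card_gt_le {α : Type*} [Infinite α] (s : Finset α)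
    (m : α → ℕ) (D : ℕ) : ∃ S : Finset α, #S = D + 1 ∧ ∀ v ∈ S, #{w ∈ s | m v < m w} ≤ D := by
  classical
  by_cases hs : #s ≤ D
  · obtain ⟨S, hS⟩ := Infinite.exists_subset_card_eq α (D + 1)
    exact ⟨S, hS, fun v _ => (card_filter_le _ _).trans hs⟩
  set B := {v ∈ s | #{w ∈ s | m v < m w} ≤ D}
  suffices hB : D + 1 ≤ #B by
    obtain ⟨S, hSB, hS⟩ := exists_subset_card_eq hB
    exact ⟨S, hS, fun v hv => (mem_filter.1 (hSB hv)).2⟩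
  by_contra! hB
  -- a value of `s \ B` of maximal `m` only has values of `B` above it
  obtain ⟨v, hv, hvmax⟩ := exists_max_image (s \ B) m
    (sdiff_nonempty.2 fun h => by have := card_le_card h; omega)
  have habove : {w ∈ s | m v < m w} ⊆ B := fun w hw => by
    obtain ⟨hws, hvw⟩ := mem_filter.1 hw
    by_contra hwB
    exact absurd (hvmax w (mem_sdiff.2 ⟨hws, hwB⟩)) (not_le.2 hvw)
  exact (mem_sdiff.1 hv).2 (mem_filter.2 ⟨(mem_sdiff.1 hv).1, by
    have := card_le_card habove; omega⟩)

namespace List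

theorem getD_le_getD_of_pairwise_ge {l : List ℕ} (hl : l.Pairwise (· ≥ ·)) {r r' : ℕ}
    (h : r ≤ r') : l.getD r' 0 ≤ l.getD r 0 := by
  by_cases hr' : r' < l.length
  · rw [getD_eq_getElem _ _ hr', getD_eq_getElem _ _ (h.trans_lt hr')]
    rcases h.eq_or_lt with rfl | hlt
    · rfl
    · exact pairwise_iff_getElem.1 hl r r' _ hr' hlt
  · rw [getD_eq_default _ _ (not_lt.1 hr')]
    exact Nat.zero_le _

theorem sum_take_eq_sum_range_getD (l : List ℕ) (k : ℕ) :
    (l.take k).sum = ∑ r ∈ Finset.range k, l.getD r 0 := by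
  induction k with
  | zero => simp
  | succ k ih =>
    rw [take_add_one, sum_append, ih, Finset.sum_range_succ, getD_eq_getElem?_getD]
    cases l[k]? <;> simp

end List

theorem card_le_sum_take_of_card_column_le {l : List ℕ} (hl : l.Pairwise (· ≥ ·))
    {S : Finset (ℕ × ℕ)} (hS : ∀ p ∈ S, p.2 < l.getD p.1 0) {k : ℕ}
    (hcol : ∀ c, #{p ∈ S | p.2 = c} ≤ k) : #S ≤ (l.take k).sum := by
  have hcolumn : ∀ c, #{p ∈ S | p.2 = c} ≤ #{r ∈ range k | c < l.getD r 0} := by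
    intro c
    by_cases hfull : ∀ r < k, c < l.getD r 0
    · rw [filter_true_of_mem fun r hr => hfull r (mem_range.1 hr), card_range]
      exact hcol c
    push Not at hfull
    obtain ⟨r₀, hr₀k, hr₀⟩ := hfull
    -- column `c` ends above row `r₀ < k`, so the rows embed it into the first `k` rows
    refine card_le_card_of_injOn Prod.fst (fun p hp => ?_) (fun p hp q hq hpq => ?_)
    · obtain ⟨hpS, rfl⟩ := mem_filter.1 hp
      have hp := hS p hpS
      have : p.1 < r₀ := lt_of_not_ge fun h => by
        have := List.getD_le_getD_of_pairwise_ge hl h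
        omega
      simp only [coe_filter, Set.mem_ofPred_eq, mem_range]
      exact ⟨by omega, hp⟩
    · exact Prod.ext hpq ((mem_filter.1 hp).2.trans (mem_filter.1 hq).2.symm)
  have hW : ∀ r, l.getD r 0 ≤ l.getD 0 0 := fun r =>
    List.getD_le_getD_of_pairwise_ge hl (Nat.zero_le r)
  calc #S = ∑ c ∈ range (l.getD 0 0), #{p ∈ S | p.2 = c} :=
        card_eq_sum_card_fiberwise fun p hp => mem_range.2 ((hS p hp).trans_le (hW _))
    _ ≤ ∑ c ∈ range (l.getD 0 0), #{r ∈ range k | c < l.getD r 0} :=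
        sum_le_sum fun c _ => hcolumn c
    _ = ∑ r ∈ range k, #{c ∈ range (l.getD 0 0) | c < l.getD r 0} := by
        simp only [card_filter]
        exact sum_comm
    _ = (l.take k).sum := by
        rw [List.sum_take_eq_sum_range_getD]
        refine sum_congr rfl fun r _ => ?_
        have hr := hW r
        rw [show {c ∈ range (l.getD 0 0) | c < l.getD r 0} = range (l.getD r 0) by
          ext; simp only [mem_filter, mem_range]; omega, card_range]

theorem mult_eq_card_s11 {α : Type*} {n : ℕ} (a : Fin n → α) (v : α) [DecidablePred (a · = v)] :
    mult a v = #{i | a i = v} := by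
  rw [mult, ← Set.ncard_coe_finset]
  simp

theorem card_filter_index_lt_eq_sum_take {K : Type*} {n : ℕ} {a : Fin n → K} {μ : List ℕ}
    {α : Fin μ.length → K} (hα : Function.Injective α) (hmult : ∀ j, mult a (α j) = μ.get j)
    {ρ : Fin n → Fin μ.length} (hρ : ∀ i, a i = α (ρ i)) (k : ℕ) :
    #{i | (ρ i : ℕ) < k} = (μ.take k).sum := by
  classical
  rw [List.sum_take_eq_sum_range_getD, card_eq_sum_card_fiberwise (f := fun i => (ρ i : ℕ))
    (t := range k) fun i hi => mem_range.2 (mem_filter.1 hi).2]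
  refine sum_congr rfl fun r hr => ?_
  beta_reduce
  by_cases hrμ : r < μ.length
  · have hfiber : ({i | (ρ i : ℕ) < k ∧ (ρ i : ℕ) = r} : Finset (Fin n)) =
        ({i | a i = α ⟨r, hrμ⟩} : Finset (Fin n)) := by
      ext i
      simp only [mem_filter, mem_univ, true_and, hρ, hα.eq_iff, Fin.ext_iff]
      have := mem_range.1 hr
      omega
    rw [filter_filter, hfiber, ← mult_eq_card_s11, hmult, List.getD_eq_getElem _ _ hrμ]
    rfl
  · rw [List.getD_eq_default _ _ (not_lt.1 hrμ), card_eq_zero, filter_eq_empty_iff]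
    intro i _ hi
    exact hrμ (hi ▸ (ρ i).2)

section LaterCount

variable {α : Type*} [DecidableEq α] {n : ℕ}

def laterCount (a : Fin n → α) (i : Fin n) : ℕ := #{j | i < j ∧ a j = a i}

theorem laterCount_cons (v : α) (a : Fin n → α) :
    laterCount (Fin.cons v a : Fin (n + 1) → α) = Fin.cons (mult a v) (laterCount a) := by
  ext i
  refine Fin.cases ?_ (fun i => ?_) i
  · simp [laterCount, mult_eq_card_s11, Fin.card_filter_univ_succ]
  · simp [laterCount, Fin.card_filter_univ_succ, Fin.succ_lt_succ_iff]

theorem laterCount_lt_mult (a : Fin n → α) (i : Fin n) : laterCount a i < mult a (a i) := by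
  rw [mult_eq_card_s11]
  refine card_lt_card ⟨fun j hj => ?_, fun h => ?_⟩
  · simp only [mem_filter, mem_univ, true_and] at hj ⊢
    exact hj.2
  · simpa using h (mem_filter.2 ⟨mem_univ i, rfl⟩)

theorem laterCount_lt_of_lt {a : Fin n → α} {i j : Fin n} (hij : i < j) (h : a i = a j) :
    laterCount a j < laterCount a i := by
  refine card_lt_card ⟨fun k hk => ?_, fun hsub => ?_⟩
  · simp only [mem_filter, mem_univ, true_and] at hk ⊢
    exact ⟨hij.trans hk.1, hk.2.trans h.symm⟩
  · simpa using hsub (mem_filter.2 ⟨mem_univ j, hij, h.symm⟩)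

theorem eq_of_laterCount_eq {a : Fin n → α} {i j : Fin n} (h : a i = a j)
    (h' : laterCount a i = laterCount a j) : i = j := by
  rcases lt_trichotomy i j with hij | hij | hij
  · exact absurd h' (laterCount_lt_of_lt hij h).ne'
  · exact hij
  · exact absurd h' (laterCount_lt_of_lt hij h.symm).ne

theorem exists_laterCount_eq (a : Fin n → α) {v : α} {c : ℕ} (hc : c < mult a v) :
    ∃ i, a i = v ∧ laterCount a i = c := by
  have hsurj := surjOn_of_injOn_of_card_le (s := {i | a i = v}) (t := range (mult a v))
    (laterCount a) (fun i hi => ?_) (fun i hi j hj hij => ?_) (by simp [mult_eq_card_s11])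
  · obtain ⟨i, hi, hic⟩ := hsurj (mem_range.2 hc)
    exact ⟨i, (mem_filter.1 hi).2, hic⟩
  · have hv : a i = v := (mem_filter.1 hi).2
    simpa [← hv] using laterCount_lt_mult a i
  · exact eq_of_laterCount_eq ((mem_filter.1 hi).2.trans (mem_filter.1 hj).2.symm) hij

theorem card_laterCount_eq_le (a : Fin n → α) (c : ℕ) :
    #{i | laterCount a i = c} ≤ #{v ∈ univ.image a | c < mult a v} := by
  refine card_le_card_of_injOn a (fun i hi => ?_) (fun i hi j hj hij => ?_)
  · have hc : laterCount a i = c := (mem_filter.1 hi).2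
    simpa [← hc] using laterCount_lt_mult a i
  · exact eq_of_laterCount_eq hij ((mem_filter.1 hi).2.trans (mem_filter.1 hj).2.symm)

end LaterCount

section SpechtPoly

variable {K : Type*} [Field K] {n : ℕ} {T : Fin n → ℕ × ℕ} {a : Fin n → K}

theorem spechtPoly_ne_zero : spechtPoly n K T ≠ 0 :=
  prod_ne_zero_iff.2 fun p hp => sub_ne_zero.2 fun h => by
    simp [X_injective h] at hp

theorem eval_spechtPoly_ne_zero_iff :
    eval a (spechtPoly n K T) ≠ 0 ↔
      ∀ i j, (T i).2 = (T j).2 → (T i).1 < (T j).1 → a i ≠ a j := by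
  simp [spechtPoly, prod_ne_zero_iff, sub_ne_zero]

theorem eq_of_eval_spechtPoly_ne_zero (hT : Function.Injective T)
    (h : eval a (spechtPoly n K T) ≠ 0) {i j : Fin n} (hc : (T i).2 = (T j).2) (hv : a i = a j) :
    i = j := by
  by_contra hij
  have hr : (T i).1 ≠ (T j).1 := fun hr => hij (hT (Prod.ext hr hc))
  rcases hr.lt_or_gt with hr | hr
  · exact eval_spechtPoly_ne_zero_iff.1 h i j hc hr hv
  · exact eval_spechtPoly_ne_zero_iff.1 h j i hc.symm hr hv.symm

theorem lex_degree_spechtPoly_apply (hT : Function.Injective T) (i : Fin n) :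
    lex.degree (spechtPoly n K T) i = laterCount (fun j => (T j).2) i := by
  classical
  have hne : ∀ p : Fin n × Fin n, (T p.1).1 < (T p.2).1 → p.1 ≠ p.2 :=
    fun p hp h => by simp [h] at hp
  have hdeg := fun p (hp : p ∈ ({p | (T p.1).2 = (T p.2).2 ∧ (T p.1).1 < (T p.2).1} : Finset _)) =>
    lex_degree_X_sub_X (R := K) (hne p (mem_filter.1 hp).2.2)
  rw [spechtPoly,
    degree_prod fun p hp => ne_zero_of_degree_ne_zero (m := lex) (by simp [hdeg p hp]),
    sum_congr rfl hdeg, Finsupp.finsetSum_apply]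
  simp only [Finsupp.single_apply, sum_boole, Nat.cast_id]
  -- a later entry `j` of the column of `i` is matched with the factor `x_i - x_j` or `x_j - x_i`
  symm
  refine card_nbij' (fun j => if (T i).1 < (T j).1 then (i, j) else (j, i))
    (fun p => max p.1 p.2) ?_ ?_ ?_ ?_ <;> intro x hx <;>
    simp only [coe_filter, Set.mem_ofPred_eq, mem_univ, true_and] at hx ⊢ <;> grind

theorem dominates_of_eval_spechtPoly_ne_zero {l μ : List ℕ} (hl : l.Pairwise (· ≥ ·))
    (hT : IsTableau n l T) (ha : HasOrbitType a μ) (h : eval a (spechtPoly n K T) ≠ 0) :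
    Dominates l μ := by
  obtain ⟨-, α, hα, hcover, hmult⟩ := ha
  choose ρ hρ using hcover
  intro k
  -- the entries whose value is one of the `k` most frequent ones
  set A : Finset (Fin n) := {i | (ρ i : ℕ) < k}
  have hcol : ∀ c, #{p ∈ A.image T | p.2 = c} ≤ k := by
    intro c
    rw [filter_image]
    refine card_image_le.trans ?_
    calc #{i ∈ A | (T i).2 = c} ≤ #(range k) := by
          refine card_le_card_of_injOn (fun i => (ρ i : ℕ)) (fun i hi => ?_)
            (fun i hi j hj hij => ?_)
          · exact mem_range.2 (mem_filter.1 (mem_filter.1 hi).1).2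
          · refine eq_of_eval_spechtPoly_ne_zero hT.1 h
              ((mem_filter.1 hi).2.trans (mem_filter.1 hj).2.symm) ?_
            rw [hρ, hρ, Fin.ext hij]
      _ = k := card_range k
  have hcells : ∀ p ∈ A.image T, p.2 < l.getD p.1 0 := by
    intro p hp
    obtain ⟨i, -, rfl⟩ := mem_image.1 hp
    exact ((hT.2 (T i)).1 ⟨i, rfl⟩).2
  calc (μ.take k).sum = #(A.image T) := by
        rw [card_image_of_injective _ hT.1, card_filter_index_lt_eq_sum_take hα hmult hρ]
    _ ≤ (l.take k).sum := card_le_sum_take_of_card_column_le hl hcells hcol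

end SpechtPoly

section OrbitType

variable {K : Type*} [DecidableEq K] {n : ℕ} (a : Fin n → K)

noncomputable def orbitValues : List K :=
  (univ.image a).toList.mergeSort fun u v => mult a v ≤ mult a u

noncomputable def orbitType : List ℕ := (orbitValues a).map (mult a)

noncomputable def canonicalTableau (i : Fin n) : ℕ × ℕ :=
  ((orbitValues a).idxOf (a i), laterCount a i)

variable {a}

theorem mem_orbitValues {v : K} : v ∈ orbitValues a ↔ ∃ i, a i = v := by
  simp [orbitValues, List.mem_mergeSort]

theorem nodup_orbitValues : (orbitValues a).Nodup :=
  (List.mergeSort_perm _ _).nodup_iff.2 (nodup_toList _)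

theorem length_orbitType : (orbitType a).length = (orbitValues a).length := List.length_map _

theorem pairwise_orbitType : (orbitType a).Pairwise (· ≥ ·) := by
  refine List.pairwise_map.2 ((List.pairwise_mergeSort ?_ ?_ _).imp ?_) <;> simp <;> omega

theorem isPartitionList_orbitType : IsPartitionList n (orbitType a) := by
  refine ⟨pairwise_orbitType, ?_, ?_⟩
  · simp only [orbitType, List.mem_map, mem_orbitValues]
    rintro _ ⟨_, ⟨i, rfl⟩, rfl⟩
    exact (laterCount_lt_mult a i).pos
  · rw [orbitType, orbitValues, ((List.mergeSort_perm _ _).map _).sum_eq, sum_map_toList]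
    simp_rw [mult_eq_card_s11]
    rw [← card_eq_sum_card_image, card_univ, Fintype.card_fin]

theorem hasOrbitType_orbitType : HasOrbitType a (orbitType a) := by
  refine ⟨pairwise_orbitType, fun j => (orbitValues a)[j.1]'(j.2.trans_eq length_orbitType), ?_,
    ?_, ?_⟩
  · intro j j' h
    exact Fin.ext (nodup_orbitValues.getElem_inj_iff.1 h)
  · intro i
    obtain ⟨j, hj, hja⟩ := List.getElem_of_mem ((mem_orbitValues (a := a)).2 ⟨i, rfl⟩)
    exact ⟨⟨j, hj.trans_eq (length_orbitType (a := a)).symm⟩, hja.symm⟩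
  · intro j
    exact (List.getElem_map ..).symm

theorem isTableau_canonicalTableau : IsTableau n (orbitType a) (canonicalTableau a) := by
  have hidx : ∀ i, (orbitValues a).idxOf (a i) < (orbitValues a).length := fun i =>
    List.idxOf_lt_length_iff.2 ((mem_orbitValues (a := a)).2 ⟨i, rfl⟩)
  have hgetD : ∀ r (h : r < (orbitValues a).length),
      (orbitType a).getD r 0 = mult a (orbitValues a)[r] := fun r h => by
    rw [List.getD_eq_getElem _ _ (h.trans_eq length_orbitType.symm)]
    exact List.getElem_map ..
  refine ⟨fun i j h => ?_, fun p => ⟨?_, fun ⟨hr, hc⟩ => ?_⟩⟩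
  · obtain ⟨hrow, hcol⟩ := Prod.mk.inj h
    exact eq_of_laterCount_eq
      ((List.idxOf_inj ((mem_orbitValues (a := a)).2 ⟨i, rfl⟩)).1 hrow) hcol
  · rintro ⟨i, rfl⟩
    refine ⟨(hidx i).trans_eq length_orbitType.symm, ?_⟩
    rw [canonicalTableau, hgetD _ (hidx i), List.getElem_idxOf]
    exact laterCount_lt_mult a i
  · rw [length_orbitType] at hr
    rw [hgetD _ hr] at hc
    obtain ⟨i, hi, hic⟩ := exists_laterCount_eq a hc
    refine ⟨i, Prod.ext ?_ hic⟩
    rw [canonicalTableau, hi, nodup_orbitValues.idxOf_getElem]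

end OrbitType

/-- The new first coordinate `v` must have at most `lex.degree f 0` values of `a'` strictly more
frequent than itself. There are `lex.degree f 0 + 1` such values, and `f (·, a')` is a nonzero
polynomial of degree at most `lex.degree f 0`, so it does not vanish at all of them. -/
theorem exists_eval_ne_zero_laterCount_le {K : Type*} [Field K] [Infinite K] [DecidableEq K]
    {n : ℕ} {f : MvPolynomial (Fin n) K} (hf : f ≠ 0) :
    ∃ a : Fin n → K, eval a f ≠ 0 ∧ ∀ i, laterCount (laterCount a) i ≤ lex.degree f i := by
  induction n with
  | zero =>
    refine ⟨finZeroElim, ?_, finZeroElim⟩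
    rw [eq_C_of_isEmpty f, eval_C]
    exact fun h => hf (by rw [eq_C_of_isEmpty f, h, C_0])
  | succ n ih =>
    set β := lex.degree f
    obtain ⟨a', ha', hle⟩ := ih (coeff_finSuccEquiv_lex_degree_ne_zero hf)
    set φ := (finSuccEquiv K n f).map (eval a')
    have hφ : φ ≠ 0 := fun h => ha' (by simpa [φ] using congr(Polynomial.coeff $h (β 0)))
    have hφdeg : φ.natDegree ≤ β 0 := Polynomial.natDegree_map_le.trans
      ((natDegree_finSuccEquiv f).trans_le (degreeOf_zero_le_lex_degree f))
    obtain ⟨S, hS, hSgood⟩ := (univ.image a').exists_card_eq_forall_card_gt_le (mult a') (β 0)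
    obtain ⟨v, hvS, hv⟩ : ∃ v ∈ S, φ.eval v ≠ 0 := by
      by_contra! h
      exact hφ (Polynomial.eq_zero_of_natDegree_lt_card_of_eval_eq_zero' φ S h (by omega))
    refine ⟨Fin.cons v a', by rwa [eval_eq_eval_mv_eval'], Fin.cases ?_ fun i => ?_⟩
    · rw [laterCount_cons, laterCount_cons, Fin.cons_zero, mult_eq_card_s11]
      exact (card_laterCount_eq_le a' _).trans (hSgood v hvS)
    · rw [laterCount_cons, laterCount_cons, Fin.cons_succ]
      have := hle i
      rwa [lex_degree_coeff_finSuccEquiv hf, Finsupp.tail_apply] at this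

def orbitTypeLocus (n : ℕ) (K : Type*) (G : Set (List ℕ)) : Set (Fin n → K) :=
  {a | ∃ μ, IsPartitionList n μ ∧ μ ∈ G ∧ HasOrbitType a μ}

section SpechtIdealFilter

variable {K : Type*} [Field K] {n : ℕ} {F : Set (List ℕ)}

theorem spechtPoly_mem_vanishingIdeal (hF : IsLowerFilter n F) {l : List ℕ} (hl : l ∈ F)
    {T : Fin n → ℕ × ℕ} (hT : IsTableau n l T) :
    spechtPoly n K T ∈ vanishingIdeal K (orbitTypeLocus n K Fᶜ) := by
  rintro a ⟨μ, hμ, hμF, ha⟩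
  by_contra h
  exact hμF (hF.2 l μ hμ hl (dominates_of_eval_spechtPoly_ne_zero (hF.1 l hl).1 hT ha h))

theorem spechtIdealFilter_le_vanishingIdeal (hF : IsLowerFilter n F) :
    spechtIdealFilter n K F ≤ vanishingIdeal K (orbitTypeLocus n K Fᶜ) :=
  Ideal.span_le.2 fun _ ⟨_, hl, _, hT, hf⟩ => hf ▸ spechtPoly_mem_vanishingIdeal hF hl hT

theorem vanishingIdeal_le_spechtIdealFilter [Infinite K] (hF : IsLowerFilter n F) :
    vanishingIdeal K (orbitTypeLocus n K Fᶜ) ≤ spechtIdealFilter n K F := by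
  classical
  intro f hf
  induction hd : lex.toSyn (lex.degree f) using WellFoundedLT.induction generalizing f with
  | ind d ih =>
  subst hd
  by_cases hf0 : f = 0
  · exact hf0 ▸ zero_mem _
  obtain ⟨a, ha, hle⟩ := exists_eval_ne_zero_laterCount_le hf0
  have hshape : orbitType a ∈ F := by
    by_contra h
    exact ha (by simpa using hf a ⟨_, isPartitionList_orbitType, h, hasOrbitType_orbitType⟩)
  set s := spechtPoly n K (canonicalTableau a)
  have hs : s ∈ spechtIdealFilter n K F :=
    Ideal.subset_span ⟨_, hshape, _, isTableau_canonicalTableau, rfl⟩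
  have hunit : IsUnit (lex.leadingCoeff s) :=
    (leadingCoeff_ne_zero_iff.2 spechtPoly_ne_zero).isUnit
  have hdeg : lex.degree s ≤ lex.degree f := fun i =>
    (lex_degree_spechtPoly_apply isTableau_canonicalTableau.1 i).trans_le (hle i)
  suffices lex.reduce hunit f ∈ spechtIdealFilter n K F from
    (Submodule.sub_mem_iff_left _ (Ideal.mul_mem_left _ _ hs)).1 this
  rcases reduce_eq_zero_or_degree_lt hunit hdeg with h0 | hlt
  · exact h0 ▸ zero_mem _
  · exact ih _ hlt
      (sub_mem hf (Ideal.mul_mem_left _ _ (spechtIdealFilter_le_vanishingIdeal hF hs))) rfl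

end SpechtIdealFilter

theorem spechtIdealFilter_eq_vanishing_general {K : Type*} [Field K] [Infinite K] {n : ℕ}
    {F : Set (List ℕ)} (hF : IsLowerFilter n F) :
    (∀ f : MvPolynomial (Fin n) K,
      f ∈ spechtIdealFilter n K F ↔
        ∀ a : Fin n → K,
          (∃ μ, IsPartitionList n μ ∧ μ ∉ F ∧ HasOrbitType a μ) → eval a f = 0) ∧
    (spechtIdealFilter n K F).IsRadical := by
  have hI : spechtIdealFilter n K F = vanishingIdeal K (orbitTypeLocus n K Fᶜ) :=
    le_antisymm (spechtIdealFilter_le_vanishingIdeal hF) (vanishingIdeal_le_spechtIdealFilter hF)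
  refine ⟨fun f => ?_, hI ▸ isRadical_vanishingIdeal _⟩
  rw [hI, mem_vanishingIdeal_iff]
  rfl

/-- `I_F = J_{P_n ∖ F}` for any nonempty lower filter `F`; in particular `I_F`
is a radical ideal. -/
theorem spechtIdealFilter_eq_vanishing {K : Type*} [Field K] [Infinite K] {n : ℕ}
    {F : Set (List ℕ)} (hF : IsLowerFilter n F) (hne : F.Nonempty) :
    (∀ f : MvPolynomial (Fin n) K,
      f ∈ spechtIdealFilter n K F ↔
        ∀ a : Fin n → K,
          (∃ μ, IsPartitionList n μ ∧ μ ∉ F ∧ HasOrbitType a μ) → eval a f = 0) ∧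
    (spechtIdealFilter n K F).IsRadical :=
  spechtIdealFilter_eq_vanishing_general hF
end
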